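/- If ω_N is a 2-stiff configuration on S^d, d ≥ 1, then for every z ∈ D_2(ω_N), the set of dot products of z with points of ω_N is exactly D(z, ω_N) = {-1/√(d+1), 1/√(d+1)}. -/

import Mathlib

open MeasureTheory Metric
open scoped RealInnerProductSpace

noncomputable section

/-- `E n` is the Euclidean space `ℝ^n`; the unit sphere `S^{n-1}` is `Metric.sphere (0 : E n) 1`. -/
abbrev E (n : ℕ) : Type := EuclideanSpace ℝ (Fin n)

/-- The surface area measure on the unit sphere of `ℝ^n`, normalized to be a probability
measure. -/
noncomputable def sphereUnif (n : ℕ) : Measure (sphere (0 : E n) 1) :=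
  (((volume : Measure (E n)).toSphere) Set.univ)⁻¹ • (volume : Measure (E n)).toSphere

/-- `X` is a spherical `k`-design on the unit sphere of `ℝ^n`: all its points lie on the sphere
and every polynomial of total degree at most `k` has average over `X` equal to its average over
the sphere (with respect to the normalized surface area measure). -/
def IsSphericalDesign (n k : ℕ) (X : Finset (E n)) : Prop :=
  (↑X : Set (E n)) ⊆ sphere (0 : E n) 1 ∧
    ∀ p : MvPolynomial (Fin n) ℝ, p.totalDegree ≤ k →
      (∑ x ∈ X, MvPolynomial.eval (fun i => x i) p) / (X.card : ℝ) =
        ∫ y, MvPolynomial.eval (fun i => (y : E n) i) p ∂(sphereUnif n)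

/-- `Dm n m X` is the set of points `z` of the unit sphere of `ℝ^n` forming at most `m`
distinct dot products with the points of `X`. -/
def Dm (n m : ℕ) (X : Set (E n)) : Set (E n) :=
  {z | z ∈ sphere (0 : E n) 1 ∧ ∃ T : Finset ℝ, T.card ≤ m ∧ ∀ x ∈ X, ⟪z, x⟫ ∈ T}

/-- `X` is an `m`-stiff configuration on the unit sphere of `ℝ^n`: it is a spherical
`(2m-1)`-design and some point of the sphere forms at most `m` distinct dot products with the
points of `X`. -/
def IsStiff (n m : ℕ) (X : Finset (E n)) : Prop :=
  IsSphericalDesign n (2 * m - 1) X ∧ (Dm n m ↑X).Nonempty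

/-!
For `z ∈ D₂(ω)` the dot products `t = ⟪z, x⟫` take at most two values `a, b`, so
`t² = (a + b) t - a b` on `ω`. Since `ω` is a 3-design, the averages of `t, t², t³` over `ω` are
the sphere moments `0, 1/(d+1), 0`: odd moments vanish by the symmetry `y ↦ -y`, and the second
moment is the same for all unit vectors `z` (reflections act transitively on the sphere), so
summing it over the coordinate vectors gives `1/(d+1)`. Substituting the quadratic relation into
the moment identities yields `a b = -1/(d+1)` and `a + b = 0`, and since the dot products sum to
zero both signs occur.
-/

open scoped Pointwise

namespace LinearIsometryEquiv

variable {F : Type*} [NormedAddCommGroup F] [NormedSpace ℝ F]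

def sphereMap (e : F ≃ₗᵢ[ℝ] F) (y : sphere (0 : F) 1) : sphere (0 : F) 1 :=
  ⟨e y, by simp⟩

@[simp]
theorem coe_sphereMap (e : F ≃ₗᵢ[ℝ] F) (y : sphere (0 : F) 1) : (e.sphereMap y : F) = e y :=
  rfl

theorem continuous_sphereMap (e : F ≃ₗᵢ[ℝ] F) : Continuous e.sphereMap :=
  (e.continuous.comp continuous_subtype_val).subtype_mk _

theorem image_coe_preimage_sphereMap (e : F ≃ₗᵢ[ℝ] F) (s : Set (sphere (0 : F) 1)) :
    (↑) '' (e.sphereMap ⁻¹' s) = e ⁻¹' ((↑) '' s) := by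
  ext x
  constructor
  · rintro ⟨y, hy, rfl⟩
    exact ⟨e.sphereMap y, hy, rfl⟩
  · rintro ⟨w, hw, hwx⟩
    have hx : x ∈ sphere (0 : F) 1 := by
      rw [mem_sphere_zero_iff_norm, ← e.norm_map, ← hwx]
      exact mem_sphere_zero_iff_norm.mp w.2
    refine ⟨⟨x, hx⟩, ?_, rfl⟩
    rwa [Set.mem_preimage, show e.sphereMap ⟨x, hx⟩ = w from Subtype.ext hwx.symm]

theorem preimage_smul (e : F ≃ₗᵢ[ℝ] F) (S : Set ℝ) (A : Set F) :
    e ⁻¹' (S • A) = S • e ⁻¹' A := by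
  ext x
  constructor
  · rintro ⟨r, hr, b, hb, hbx⟩
    exact ⟨r, hr, e.symm b, by simpa using hb, by
      simp only at hbx ⊢
      rw [← e.symm.map_smul, hbx, e.symm_apply_apply]⟩
  · rintro ⟨r, hr, a, ha, rfl⟩
    exact ⟨r, hr, e a, ha, (e.map_smul r a).symm⟩

theorem map_sphereMap_toSphere [MeasurableSpace F] [BorelSpace F] {μ : Measure F}
    (e : F ≃ₗᵢ[ℝ] F) (he : MeasurePreserving e μ μ) :
    μ.toSphere.map e.sphereMap = μ.toSphere := by
  ext s hs
  have hs' : MeasurableSet (e.sphereMap ⁻¹' s) := e.continuous_sphereMap.measurable hs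
  rw [Measure.map_apply e.continuous_sphereMap.measurable hs, Measure.toSphere_apply' _ hs,
    Measure.toSphere_apply' _ hs', image_coe_preimage_sphereMap, ← preimage_smul,
    he.measure_preimage_emb e.toHomeomorph.measurableEmbedding]

end LinearIsometryEquiv

section SphereUnif

variable {n : ℕ}

instance [NeZero n] : IsProbabilityMeasure (sphereUnif n) := by
  have : NeZero (volume : Measure (E n)).toSphere := ⟨Measure.toSphere_ne_zero _⟩
  exact isProbabilityMeasureSMul

theorem map_sphereMap_sphereUnif (e : E n ≃ₗᵢ[ℝ] E n) :
    (sphereUnif n).map e.sphereMap = sphereUnif n := by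
  rw [sphereUnif, Measure.map_smul, e.map_sphereMap_toSphere e.measurePreserving]

theorem integral_comp_inner_map (e : E n ≃ₗᵢ[ℝ] E n) (z : E n) {g : ℝ → ℝ} (hg : Continuous g) :
    ∫ y, g ⟪e z, (y : E n)⟫ ∂(sphereUnif n) = ∫ y, g ⟪z, (y : E n)⟫ ∂(sphereUnif n) := by
  have hcont : Continuous fun y : sphere (0 : E n) 1 => g ⟪e z, (y : E n)⟫ := by fun_prop
  conv_lhs => rw [← map_sphereMap_sphereUnif e]
  rw [integral_map e.continuous_sphereMap.aemeasurable hcont.aestronglyMeasurable]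
  simp only [LinearIsometryEquiv.coe_sphereMap, LinearIsometryEquiv.inner_map_map]

theorem integral_inner_pow_of_odd (z : E n) {k : ℕ} (hk : Odd k) :
    ∫ y, ⟪z, (y : E n)⟫ ^ k ∂(sphereUnif n) = 0 := by
  have h := integral_comp_inner_map (LinearIsometryEquiv.neg ℝ) z (continuous_pow k)
  simp only [LinearIsometryEquiv.coe_neg, inner_neg_left, hk.neg_pow, integral_neg] at h
  linarith

theorem integral_inner_sq_eq_of_norm_eq {z w : E n} (h : ‖z‖ = ‖w‖) :
    ∫ y, ⟪z, (y : E n)⟫ ^ 2 ∂(sphereUnif n) = ∫ y, ⟪w, (y : E n)⟫ ^ 2 ∂(sphereUnif n) := by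
  rw [← integral_comp_inner_map (Submodule.reflection (ℝ ∙ (z - w))ᗮ) z (continuous_pow 2),
    Submodule.reflection_sub h]

theorem integral_inner_sq [NeZero n] {z : E n} (hz : ‖z‖ = 1) :
    ∫ y, ⟪z, (y : E n)⟫ ^ 2 ∂(sphereUnif n) = 1 / n := by
  have hcoord (i : Fin n) :
      ∫ y, (y : E n) i ^ 2 ∂(sphereUnif n) = ∫ y, ⟪z, (y : E n)⟫ ^ 2 ∂(sphereUnif n) := by
    rw [integral_inner_sq_eq_of_norm_eq (w := EuclideanSpace.single i 1) (by simp [hz])]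
    simp [EuclideanSpace.inner_single_left]
  have hsum : ∑ i, ∫ y, (y : E n) i ^ 2 ∂(sphereUnif n) = 1 := by
    rw [← integral_finsetSum _ fun i _ => ?_]
    · have hnorm (y : sphere (0 : E n) 1) : ∑ i, (y : E n) i ^ 2 = 1 := by
        rw [← EuclideanSpace.real_norm_sq_eq, norm_eq_of_mem_sphere, one_pow]
      simp [hnorm]
    · have : Continuous fun y : sphere (0 : E n) 1 => (y : E n) i ^ 2 := by fun_prop
      exact this.integrable_of_hasCompactSupport (.of_compactSpace _)
  simp only [hcoord, Finset.sum_const, Finset.card_univ, Fintype.card_fin, nsmul_eq_mul] at hsum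
  rw [eq_div_iff (Nat.cast_ne_zero.mpr (NeZero.ne n))]
  linarith

end SphereUnif

section Design

open MvPolynomial

variable {n k : ℕ} {X : Finset (E n)}

def innerPoly (z : E n) : MvPolynomial (Fin n) ℝ :=
  ∑ i, C (z i) * MvPolynomial.X i

theorem eval_innerPoly (z x : E n) : eval (fun i => x i) (innerPoly z) = ⟪z, x⟫ := by
  simp [innerPoly, PiLp.inner_apply, mul_comm]

theorem totalDegree_innerPoly_le (z : E n) : (innerPoly z).totalDegree ≤ 1 := by
  refine (totalDegree_finsetSum _ _).trans (Finset.sup_le fun i _ => ?_)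
  exact (totalDegree_mul _ _).trans (by simp)

theorem IsSphericalDesign.sum_inner_pow_div_card (hX : IsSphericalDesign n k X) (z : E n)
    {j : ℕ} (hj : j ≤ k) :
    (∑ x ∈ X, ⟪z, x⟫ ^ j) / X.card = ∫ y, ⟪z, (y : E n)⟫ ^ j ∂(sphereUnif n) := by
  have hdeg : (innerPoly z ^ j).totalDegree ≤ k :=
    (totalDegree_pow _ _).trans <| by nlinarith [totalDegree_innerPoly_le z]
  simpa only [map_pow, eval_innerPoly] using hX.2 _ hdeg

theorem IsSphericalDesign.nonempty [NeZero n] (hX : IsSphericalDesign n k X) : X.Nonempty := by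
  have h := hX.sum_inner_pow_div_card 0 (Nat.zero_le k)
  rw [Finset.nonempty_iff_ne_empty]
  rintro rfl
  simp at h

theorem IsSphericalDesign.sum_inner_pow_of_odd (hX : IsSphericalDesign n k X) (z : E n)
    {j : ℕ} (hj : Odd j) (hjk : j ≤ k) : ∑ x ∈ X, ⟪z, x⟫ ^ j = 0 := by
  have h := hX.sum_inner_pow_div_card z hjk
  rw [integral_inner_pow_of_odd z hj, div_eq_zero_iff] at h
  rcases h with h | h
  · exact h
  · rw [Finset.card_eq_zero.mp (Nat.cast_eq_zero.mp h), Finset.sum_empty]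

theorem IsSphericalDesign.sum_inner_sq [NeZero n] (hX : IsSphericalDesign n k X) (hk : 2 ≤ k)
    {z : E n} (hz : ‖z‖ = 1) : ∑ x ∈ X, ⟪z, x⟫ ^ 2 = X.card / n := by
  have h := hX.sum_inner_pow_div_card z hk
  rw [integral_inner_sq hz, div_eq_iff (by simpa using hX.nonempty.ne_empty)] at h
  rw [h]
  ring

end Design

theorem Finset.exists_eq_or_eq_of_card_le_two {α : Type*} [Nonempty α] {T : Finset α}
    (hT : T.card ≤ 2) : ∃ a b, ∀ t ∈ T, t = a ∨ t = b := by
  classical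
  rcases Nat.lt_or_ge T.card 2 with h | h
  · obtain ⟨a, ha⟩ := card_le_one_iff_subset_singleton.mp (Nat.le_of_lt_succ h)
    exact ⟨a, a, fun t ht => .inl (mem_singleton.mp (ha ht))⟩
  · obtain ⟨a, b, -, rfl⟩ := card_eq_two.mp (hT.antisymm h)
    exact ⟨a, b, fun t ht => by simpa using ht⟩

section TwoValues

variable {ι : Type*} {s : Finset ι} {f : ι → ℝ}

theorem sq_eq_of_two_values_of_moments {a b c : ℝ} (hs : s.Nonempty) (hc : c ≠ 0)
    (hab : ∀ i ∈ s, f i = a ∨ f i = b) (h1 : ∑ i ∈ s, f i = 0)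
    (h2 : ∑ i ∈ s, f i ^ 2 = c * s.card) (h3 : ∑ i ∈ s, f i ^ 3 = 0) :
    ∀ i ∈ s, f i ^ 2 = c := by
  have hquad : ∀ i ∈ s, f i ^ 2 = (a + b) * f i - a * b := by
    intro i hi
    rcases hab i hi with h | h <;> rw [h] <;> ring
  have hsq : ∑ i ∈ s, f i ^ 2 = -(a * b) * s.card := by
    rw [Finset.sum_congr rfl hquad, Finset.sum_sub_distrib, ← Finset.mul_sum, h1,
      Finset.sum_const, nsmul_eq_mul]
    ring
  have hcube : ∑ i ∈ s, f i ^ 3 = (a + b) * ∑ i ∈ s, f i ^ 2 := by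
    calc ∑ i ∈ s, f i ^ 3 = ∑ i ∈ s, ((a + b) * f i ^ 2 - a * b * f i) :=
          Finset.sum_congr rfl fun i hi => by linear_combination f i * hquad i hi
      _ = (a + b) * ∑ i ∈ s, f i ^ 2 := by
          rw [Finset.sum_sub_distrib, ← Finset.mul_sum, ← Finset.mul_sum, h1]; ring
  have hcard : (s.card : ℝ) ≠ 0 := by exact_mod_cast hs.card_pos.ne'
  have hprod : a * b = -c := by
    linarith [mul_right_cancel₀ hcard (h2.symm.trans hsq)]
  have hsum : a + b = 0 := by
    rw [h3, h2] at hcube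
    simpa [hc, hcard] using hcube.symm
  intro i hi
  rw [hquad i hi, hsum, hprod]
  ring

theorem image_eq_neg_sqrt_sqrt {c : ℝ} (hs : s.Nonempty) (hc : 0 < c)
    (hsq : ∀ i ∈ s, f i ^ 2 = c) (h1 : ∑ i ∈ s, f i = 0) :
    f '' s = {-√c, √c} := by
  have hpm : ∀ i ∈ s, f i = √c ∨ f i = -√c := fun i hi =>
    sq_eq_sq_iff_eq_or_eq_neg.mp (by rw [hsq i hi, Real.sq_sqrt hc.le])
  have hne : ∃ i ∈ s, f i ≠ 0 := by
    obtain ⟨i, hi⟩ := hs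
    exact ⟨i, hi, fun h => hc.ne' (by rw [← hsq i hi, h]; ring)⟩
  obtain ⟨i, hi, hpos⟩ := Finset.exists_pos_of_sum_zero_of_exists_nonzero f h1 hne
  obtain ⟨j, hj, hneg⟩ := Finset.exists_pos_of_sum_zero_of_exists_nonzero (-f)
    (by simp [h1] : ∑ i ∈ s, (-f) i = 0) (by simpa using hne)
  have hsqrt : 0 < √c := Real.sqrt_pos.mpr hc
  ext t
  constructor
  · rintro ⟨k, hk, rfl⟩
    exact (hpm k hk).symm
  · rintro (rfl | rfl)
    · exact ⟨j, hj, (hpm j hj).resolve_left (by linarith [neg_pos.mp hneg])⟩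
    · exact ⟨i, hi, (hpm i hi).resolve_right (by linarith)⟩

end TwoValues

theorem two_stiff_dot_products (d : ℕ) (X : Finset (E (d + 1)))
    (hstiff : IsStiff (d + 1) 2 X) :
    ∀ z ∈ Dm (d + 1) 2 ↑X,
      (fun x => ⟪z, x⟫) '' (↑X : Set (E (d + 1))) =
        ({-(1 / Real.sqrt (d + 1)), 1 / Real.sqrt (d + 1)} : Set ℝ) := by
  rintro z ⟨hz, T, hT, hzT⟩
  have hX : IsSphericalDesign (d + 1) 3 X := hstiff.1
  have hz1 : ‖z‖ = 1 := mem_sphere_zero_iff_norm.mp hz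
  obtain ⟨a, b, hab⟩ := Finset.exists_eq_or_eq_of_card_le_two hT
  have h1 : ∑ x ∈ X, ⟪z, x⟫ = 0 := by
    simpa using hX.sum_inner_pow_of_odd z odd_one (by norm_num)
  have h2 : ∑ x ∈ X, ⟪z, x⟫ ^ 2 = ((d : ℝ) + 1)⁻¹ * X.card := by
    rw [hX.sum_inner_sq (by norm_num) hz1]
    push_cast
    ring
  have h3 : ∑ x ∈ X, ⟪z, x⟫ ^ 3 = 0 := hX.sum_inner_pow_of_odd z (by decide) le_rfl
  have hsq := sq_eq_of_two_values_of_moments hX.nonempty (by positivity)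
    (fun x hx => hab _ (hzT x hx)) h1 h2 h3
  rw [image_eq_neg_sqrt_sqrt hX.nonempty (by positivity) hsq h1]
  simp only [Real.sqrt_inv, one_div]
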